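/- Let k ≥ 4 be even and m ≥ 0 integers, b(θ) = kθ/2 − 2πm·cos(θ), and b_{m+1}(θ) = kθ/2 − 2π(m+1)·cos(θ). If α₁ < α₂ are consecutive zeros of cos(b_{m+1}(θ)) in (π/2, 2π/3), then there exists exactly one β ∈ (α₁, α₂) with cos(b(β)) = 0. -/

import Mathlib

/-!
On `(π/2, 2π/3)` we have `-1/2 < cos θ < 0`, so `b = bm1 + 2π cos` lies strictly between
`bm1 - π` and `bm1`, and both phases are strictly increasing there. Consecutive zeros of
`cos ∘ bm1` are exactly `π` apart in phase: `bm1 α₂ = bm1 α₁ + π`. Hence, with `c = bm1 α₁`,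
`b` increases from `(c - π, c)` at `α₁` to `(c, c + π)` at `α₂`, and `c` is the only zero of
`cos` in `(c - π, c + π)`.
-/

open Real Set

lemma eq_of_cos_eq_zero_of_abs_sub_lt_pi {x y : ℝ} (hx : cos x = 0) (hy : cos y = 0)
    (hxy : |x - y| < π) : x = y := by
  have hsin : sin (x - y) = 0 := by rw [sin_sub, hx, hy]; ring
  obtain ⟨hlo, hhi⟩ := abs_lt.mp hxy
  exact sub_eq_zero.mp ((sin_eq_zero_iff_of_lt_of_lt hlo hhi).mp hsin)

lemma eq_add_pi_of_consecutive_zeros_cos {f : ℝ → ℝ} {a b : ℝ} (hab : a ≤ b)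
    (hf : ContinuousOn f (Icc a b)) (hfab : f a < f b) (ha : cos (f a) = 0) (hb : cos (f b) = 0)
    (hcons : ∀ θ ∈ Ioo a b, cos (f θ) ≠ 0) : f b = f a + π := by
  rcases lt_trichotomy (f b) (f a + π) with hlt | heq | hgt
  · have hπ : |f b - f a| < π := abs_lt.mpr ⟨by linarith [pi_pos], by linarith⟩
    exact absurd (eq_of_cos_eq_zero_of_abs_sub_lt_pi hb ha hπ) hfab.ne'
  · exact heq
  · obtain ⟨θ, hθ, hfθ⟩ := intermediate_value_Ioo hab hf ⟨by linarith [pi_pos], hgt⟩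
    exact absurd (by rw [hfθ, cos_add_pi, ha, neg_zero]) (hcons θ hθ)

lemma existsUnique_cos_eq_zero_of_strictMonoOn {f : ℝ → ℝ} {a b c : ℝ} (hab : a ≤ b)
    (hf : ContinuousOn f (Icc a b)) (hmono : StrictMonoOn f (Icc a b)) (hc : cos c = 0)
    (ha : c - π < f a ∧ f a < c) (hb : c < f b ∧ f b < c + π) :
    ∃! β, β ∈ Ioo a b ∧ cos (f β) = 0 := by
  obtain ⟨β, hβ, hfβ⟩ := intermediate_value_Ioo hab hf ⟨ha.2, hb.1⟩
  refine ⟨β, ⟨hβ, hfβ ▸ hc⟩, fun γ ⟨hγ, hγz⟩ => ?_⟩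
  have hγI := Ioo_subset_Icc_self hγ
  have := hmono (left_mem_Icc.mpr hab) hγI hγ.1
  have := hmono hγI (right_mem_Icc.mpr hab) hγ.2
  have hfγ := eq_of_cos_eq_zero_of_abs_sub_lt_pi hγz hc (abs_lt.mpr ⟨by linarith, by linarith⟩)
  exact hmono.injOn hγI (Ioo_subset_Icc_self hβ) (hfγ.trans hfβ.symm)

lemma strictMonoOn_mul_sub_mul_cos {a M : ℝ} (ha : 0 < a) (hM : 0 ≤ M) :
    StrictMonoOn (fun θ => a * θ - M * cos θ) (Icc 0 π) := by
  intro x hx y hy hxy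
  have hcos : cos y ≤ cos x := cos_le_cos_of_nonneg_of_le_pi hx.1 hy.2 hxy.le
  have := mul_le_mul_of_nonneg_left hcos hM
  have := mul_lt_mul_of_pos_left hxy ha
  dsimp only
  linarith

lemma cos_mem_Ioo_of_mem_Ioo {θ : ℝ} (hθ : θ ∈ Ioo (π / 2) (2 * π / 3)) :
    cos θ ∈ Ioo (-(1 / 2)) 0 := by
  have hcos : cos (2 * π / 3) = -(1 / 2) := by
    rw [show 2 * π / 3 = π - π / 3 by ring, cos_pi_sub, cos_pi_div_three]
  refine ⟨?_, cos_neg_of_pi_div_two_lt_of_lt hθ.1 (by linarith [hθ.2, pi_pos])⟩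
  rw [← hcos]
  exact cos_lt_cos_of_nonneg_of_le_pi (by linarith [hθ.1, pi_pos]) (by linarith [pi_pos]) hθ.2

theorem stmt6_general (k m : ℤ) (hk : 4 ≤ k) (hm : 0 ≤ m)
    (b bm1 : ℝ → ℝ)
    (hb : ∀ θ, b θ = (k : ℝ) * θ / 2 - 2 * π * (m : ℝ) * Real.cos θ)
    (hbm1 : ∀ θ, bm1 θ = (k : ℝ) * θ / 2 - 2 * π * ((m : ℝ) + 1) * Real.cos θ)
    (α₁ α₂ : ℝ) (hα₁ : α₁ ∈ Set.Ioo (π / 2) (2 * π / 3)) (hα₂ : α₂ ∈ Set.Ioo (π / 2) (2 * π / 3))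
    (h12 : α₁ < α₂)
    (hz1 : Real.cos (bm1 α₁) = 0) (hz2 : Real.cos (bm1 α₂) = 0)
    (hcons : ∀ θ ∈ Set.Ioo α₁ α₂, Real.cos (bm1 θ) ≠ 0) :
    ∃! β, β ∈ Set.Ioo α₁ α₂ ∧ Real.cos (b β) = 0 := by
  have hk₀ : (0 : ℝ) < k / 2 := by
    have : (4 : ℝ) ≤ k := by exact_mod_cast hk
    linarith
  have hm₀ : (0 : ℝ) ≤ m := by exact_mod_cast hm
  have hI : Icc α₁ α₂ ⊆ Icc 0 π := fun θ hθ =>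
    ⟨by linarith [hθ.1, hα₁.1, pi_pos], by linarith [hθ.2, hα₂.2, pi_pos]⟩
  have hphase_mono (M : ℝ) (hM : 0 ≤ M) :
      StrictMonoOn (fun θ => (k : ℝ) * θ / 2 - 2 * π * M * cos θ) (Icc α₁ α₂) := by
    convert (strictMonoOn_mul_sub_mul_cos hk₀ (by positivity : 0 ≤ 2 * π * M)).mono hI using 2
    ring
  have hb_bounds : ∀ θ ∈ Ioo (π / 2) (2 * π / 3), bm1 θ - π < b θ ∧ b θ < bm1 θ := by
    intro θ hθ
    obtain ⟨hlo, hhi⟩ := cos_mem_Ioo_of_mem_Ioo hθ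
    rw [hb, hbm1]
    constructor <;> nlinarith [pi_pos]
  have hstep : bm1 α₂ = bm1 α₁ + π := by
    refine eq_add_pi_of_consecutive_zeros_cos h12.le (by rw [funext hbm1]; fun_prop) ?_
      hz1 hz2 hcons
    rw [funext hbm1]
    exact hphase_mono _ (by linarith) (left_mem_Icc.mpr h12.le) (right_mem_Icc.mpr h12.le) h12
  refine existsUnique_cos_eq_zero_of_strictMonoOn h12.le (by rw [funext hb]; fun_prop)
    (by rw [funext hb]; exact hphase_mono _ hm₀) hz1 (hb_bounds α₁ hα₁) ?_
  have := hb_bounds α₂ hα₂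
  rw [hstep] at this
  constructor <;> linarith

theorem stmt6 (k m : ℤ) (hk : 4 ≤ k) (hke : Even k) (hm : 0 ≤ m)
    (b bm1 : ℝ → ℝ)
    (hb : ∀ θ, b θ = (k : ℝ) * θ / 2 - 2 * π * (m : ℝ) * Real.cos θ)
    (hbm1 : ∀ θ, bm1 θ = (k : ℝ) * θ / 2 - 2 * π * ((m : ℝ) + 1) * Real.cos θ)
    (α₁ α₂ : ℝ) (hα₁ : α₁ ∈ Set.Ioo (π / 2) (2 * π / 3)) (hα₂ : α₂ ∈ Set.Ioo (π / 2) (2 * π / 3))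
    (h12 : α₁ < α₂)
    (hz1 : Real.cos (bm1 α₁) = 0) (hz2 : Real.cos (bm1 α₂) = 0)
    (hcons : ∀ θ ∈ Set.Ioo α₁ α₂, Real.cos (bm1 θ) ≠ 0) :
    ∃! β, β ∈ Set.Ioo α₁ α₂ ∧ Real.cos (b β) = 0 :=
  stmt6_general k m hk hm b bm1 hb hbm1 α₁ α₂ hα₁ hα₂ h12 hz1 hz2 hcons
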